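/- Consider the system y(t+1) = B(t) y(t), where each B(t) is an N×N row-stochastic matrix satisfying the balanced asymmetry condition with a common constant M ≥ 1. If the sequence of matrices B(t), t ≥ 0, has the absolute infinite flow property, then global consensus is reached: for every initial value y(0) ∈ ℝ^N there exists y* ∈ ℝ such that lim_{t→∞} y_i(t) = y* for all i. -/

import Mathlib

/-!
Sort the state at every time: `z t = y t ∘ σ t` is again a trajectory, of the matrices `B t` with
rows relabelled by `σ (t + 1)` and columns by `σ t`, and the set of the `c` lowest positions is
carried to sets of size `c`, to which balanced asymmetry and absolute infinite flow apply.

Abel summation over the gaps `z_c - z_{c-1}` of a sorted vector shows that the sum of its `k`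
smallest entries grows at least by (gap at `k`) × (weight the bottom `k` rows put above them),
minus, for each `c < k`, (gap at `c`) × (weight the upper rows put below the cut `c`). Balanced
asymmetry bounds the second kind of weight by the first, so induction on `k` makes every product
(gap at `k`) × (upward weight at `k`) summable over time; then all bottom sums, hence all sorted
entries, converge. A positive limiting gap at a cut would make the weight across that cut
summable in both directions, against absolute infinite flow; so all sorted entries, and with them
all entries, have the same limit.
-/

open Filter Finset Topology

section CutWeight

variable {ι : Type*}

def cutWeight (A : Matrix ι ι ℝ) (S T : Finset ι) : ℝ := ∑ i ∈ S, ∑ j ∈ T, A i j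

variable {A : Matrix ι ι ℝ}

lemma cutWeight_nonneg (hA : ∀ i j, 0 ≤ A i j) (S T : Finset ι) : 0 ≤ cutWeight A S T :=
  sum_nonneg fun i _ => sum_nonneg fun j _ => hA i j

lemma cutWeight_mono_left (hA : ∀ i j, 0 ≤ A i j) {S S' : Finset ι} (h : S ⊆ S')
    (T : Finset ι) : cutWeight A S T ≤ cutWeight A S' T :=
  sum_le_sum_of_subset_of_nonneg h fun i _ _ => sum_nonneg fun j _ => hA i j

lemma cutWeight_submatrix (e f : Equiv.Perm ι) (S T : Finset ι) :
    cutWeight (A.submatrix e f) S T =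
      cutWeight A (S.map e.toEmbedding) (T.map f.toEmbedding) := by
  simp only [cutWeight, sum_map, Matrix.submatrix_apply, Equiv.coe_toEmbedding]

section Compl

variable [Fintype ι] [DecidableEq ι]

lemma map_compl_equiv (e : Equiv.Perm ι) (S : Finset ι) :
    Sᶜ.map e.toEmbedding = (S.map e.toEmbedding)ᶜ := by
  ext x
  simp [mem_map_equiv]

lemma cutWeight_compl_sub_card_sdiff (hrow : ∀ i, ∑ j, A i j = 1) (S U : Finset ι) :
    cutWeight A S Uᶜ - #(S \ U) = cutWeight A (S ∩ U) Uᶜ - cutWeight A (S \ U) U := by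
  have hrows : cutWeight A (S \ U) U + cutWeight A (S \ U) Uᶜ = #(S \ U) := by
    rw [cutWeight, cutWeight, ← sum_add_distrib, card_eq_sum_ones, Nat.cast_sum]
    exact sum_congr rfl fun i _ => by rw [sum_add_sum_compl, hrow, Nat.cast_one]
  rw [← hrows, cutWeight, ← sum_inter_add_sum_sdiff S U]
  simp only [cutWeight]
  ring

lemma neg_cutWeight_le_cutWeight_compl_sub_card (hA : ∀ i j, 0 ≤ A i j)
    (hrow : ∀ i, ∑ j, A i j = 1) (S U : Finset ι) :
    -cutWeight A Uᶜ U ≤ cutWeight A S Uᶜ - #(S \ U) := by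
  rw [cutWeight_compl_sub_card_sdiff hrow]
  have hsdiff : S \ U ⊆ Uᶜ := fun i hi => by simpa using (mem_sdiff.1 hi).2
  linarith [cutWeight_mono_left hA hsdiff U, cutWeight_nonneg hA (S ∩ U) Uᶜ]

end Compl

end CutWeight

def lowerCut (n c : ℕ) : Finset (Fin n) := {i | (i : ℕ) < c}

def upWeight {n : ℕ} (A : Matrix (Fin n) (Fin n) ℝ) (c : ℕ) : ℝ :=
  cutWeight A (lowerCut n c) (lowerCut n c)ᶜ

def downWeight {n : ℕ} (A : Matrix (Fin n) (Fin n) ℝ) (c : ℕ) : ℝ :=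
  cutWeight A (lowerCut n c)ᶜ (lowerCut n c)

section LowerCut

variable {n : ℕ}

lemma upWeight_nonneg {A : Matrix (Fin n) (Fin n) ℝ} (hA : ∀ i j, 0 ≤ A i j) (c : ℕ) :
    0 ≤ upWeight A c :=
  cutWeight_nonneg hA _ _

lemma downWeight_nonneg {A : Matrix (Fin n) (Fin n) ℝ} (hA : ∀ i j, 0 ≤ A i j) (c : ℕ) :
    0 ≤ downWeight A c :=
  cutWeight_nonneg hA _ _

lemma mem_lowerCut {c : ℕ} {i : Fin n} : i ∈ lowerCut n c ↔ (i : ℕ) < c := by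
  simp [lowerCut]

lemma card_lowerCut (c : ℕ) : #(lowerCut n c) = min n c := Fin.card_filter_val_lt

lemma lowerCut_mono {c c' : ℕ} (h : c ≤ c') : lowerCut n c ⊆ lowerCut n c' := fun i hi => by
  rw [mem_lowerCut] at *
  omega

lemma lowerCut_succ (i : Fin n) : lowerCut n (i + 1) = insert i (lowerCut n i) := by
  ext j
  simp only [mem_insert, mem_lowerCut, Fin.ext_iff]
  omega

lemma sum_lowerCut_succ_sub (z : Fin n → ℝ) (i : Fin n) :
    ∑ j ∈ lowerCut n (i + 1), z j - ∑ j ∈ lowerCut n i, z j = z i := by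
  rw [lowerCut_succ, sum_insert (by simp [mem_lowerCut]), add_sub_cancel_right]

end LowerCut

/-- `Fin.clamp` extends `z` constantly past both ends, so `gap z 0 = 0` and `gap z c = 0` for
`n < c`. -/
def gap {n : ℕ} (z : Fin (n + 1) → ℝ) (c : ℕ) : ℝ :=
  z (Fin.clamp c n) - z (Fin.clamp (c - 1) n)

section Gap

variable {n : ℕ} {z : Fin (n + 1) → ℝ}

@[simp] lemma gap_zero : gap z 0 = 0 := sub_self _

lemma gap_nonneg (hz : Monotone z) (c : ℕ) : 0 ≤ gap z c :=
  sub_nonneg.2 <| hz <| Fin.le_def.2 <| by simp only [Fin.coe_clamp]; omega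

lemma gap_eq_zero_of_lt {c : ℕ} (hc : n < c) : gap z c = 0 := by
  rw [gap, sub_eq_zero]
  congr 1
  ext
  simp only [Fin.coe_clamp]
  omega

lemma eq_add_sum_gap (z : Fin (n + 1) → ℝ) (j : Fin (n + 1)) :
    z j = z 0 + ∑ c ∈ range (n + 1), if j ∉ lowerCut (n + 1) c then gap z c else 0 := by
  have hfilter : (range (n + 1)).filter (j ∉ lowerCut (n + 1) ·) = range (j + 1) := by
    ext c
    simp only [mem_filter, mem_range, mem_lowerCut]
    omega
  have hclamp : Fin.clamp j n = j := Fin.ext <| by simp [Fin.coe_clamp, Nat.le_of_lt_succ j.is_lt]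
  rw [← sum_filter, hfilter, sum_range_succ', gap_zero, add_zero]
  simp only [gap, Nat.add_sub_cancel]
  rw [sum_range_sub (fun m => z (Fin.clamp m n)), hclamp]
  simp [Fin.clamp]

lemma sum_mul_eq_sum_gap_mul (z r : Fin (n + 1) → ℝ) (hr : ∑ j, r j = 0) :
    ∑ j, r j * z j = ∑ c ∈ range (n + 1), gap z c * ∑ j ∈ (lowerCut (n + 1) c)ᶜ, r j := by
  calc ∑ j, r j * z j
      = ∑ j, (r j * z 0 + ∑ c ∈ range (n + 1),
          if j ∈ (lowerCut (n + 1) c)ᶜ then r j * gap z c else 0) := by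
        refine sum_congr rfl fun j _ => ?_
        nth_rewrite 1 [eq_add_sum_gap z j]
        simp only [mem_compl, mul_add, mul_sum, mul_ite, mul_zero]
    _ = _ := by
        rw [sum_add_distrib, ← sum_mul, hr, zero_mul, zero_add, sum_comm]
        simp only [sum_ite_mem, univ_inter, ← sum_mul, mul_comm]

end Gap

section Step

variable {n : ℕ} {A : Matrix (Fin (n + 1)) (Fin (n + 1)) ℝ}

lemma sum_mul_sub_eq_sum_gap (hrow : ∀ i, ∑ j, A i j = 1) (z : Fin (n + 1) → ℝ)
    (S : Finset (Fin (n + 1))) :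
    ∑ i ∈ S, (∑ j, A i j * z j - z i) = ∑ c ∈ range (n + 1),
      gap z c * (cutWeight A S (lowerCut (n + 1) c)ᶜ - #(S \ lowerCut (n + 1) c)) := by
  have hrowz : ∀ i, ∑ j, A i j * z j - z i = ∑ c ∈ range (n + 1), gap z c *
      (∑ j ∈ (lowerCut (n + 1) c)ᶜ, A i j - if i ∈ (lowerCut (n + 1) c)ᶜ then 1 else 0) := by
    intro i
    have := sum_mul_eq_sum_gap_mul z (fun j => A i j - if i = j then 1 else 0) (by simp [hrow])
    simpa only [sub_mul, ite_mul, one_mul, zero_mul, sum_sub_distrib, sum_ite_eq, mem_univ,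
      if_true] using this
  simp only [sum_congr rfl fun i _ => hrowz i]
  rw [sum_comm]
  refine sum_congr rfl fun c _ => ?_
  rw [← mul_sum, sum_sub_distrib, sum_boole, sdiff_eq_filter]
  simp [cutWeight]

lemma gap_mul_upWeight_sub_sum_le (hA : ∀ i j, 0 ≤ A i j) (hrow : ∀ i, ∑ j, A i j = 1)
    {z : Fin (n + 1) → ℝ} (hz : Monotone z) {k : ℕ} (hk : k ≤ n + 1) :
    gap z k * upWeight A k - ∑ c ∈ range k, gap z c * downWeight A c
      ≤ ∑ i ∈ lowerCut (n + 1) k, (∑ j, A i j * z j - z i) := by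
  set L := lowerCut (n + 1)
  rw [sum_mul_sub_eq_sum_gap hrow]
  have hterm : ∀ c ∈ range (n + 1),
      ((if k = c then gap z c * upWeight A c else 0)
        - if c < k then gap z c * downWeight A c else 0)
      ≤ gap z c * (cutWeight A (L k) (L c)ᶜ - #(L k \ L c)) := by
    intro c _
    rcases lt_or_ge c k with hck | hkc
    · rw [if_neg hck.ne', if_pos hck, zero_sub, ← mul_neg]
      exact mul_le_mul_of_nonneg_left (neg_cutWeight_le_cutWeight_compl_sub_card hA hrow _ _)
        (gap_nonneg hz c)
    · rw [if_neg (not_lt.2 hkc), sub_zero, sdiff_eq_empty_iff_subset.2 (lowerCut_mono hkc),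
        card_empty, Nat.cast_zero, sub_zero]
      split_ifs with h
      · rw [h, upWeight]
      · exact mul_nonneg (gap_nonneg hz c) (cutWeight_nonneg hA _ _)
  refine le_trans (le_of_eq ?_) (sum_le_sum hterm)
  have hfilter : (range (n + 1)).filter (· < k) = range k := by
    ext c
    simp only [mem_filter, mem_range]
    omega
  rw [sum_sub_distrib, sum_ite_eq, ← sum_filter, hfilter]
  split_ifs with hk'
  · rfl
  · rw [gap_eq_zero_of_lt (by simp at hk'; omega), zero_mul]

end Step

lemma summable_of_sub_sum_le_sub {K : ℕ} {M C : ℝ} {a b F : ℕ → ℕ → ℝ}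
    (ha : ∀ k t, 0 ≤ a k t) (hb : ∀ k t, 0 ≤ b k t) (hba : ∀ k t, b k t ≤ M * a k t)
    (hF : ∀ k t, |F k t| ≤ C)
    (hstep : ∀ k ≤ K, ∀ t, a k t - ∑ c ∈ range k, b c t ≤ F k (t + 1) - F k t) :
    ∀ k ≤ K, Summable (a k) := by
  intro k
  induction k using Nat.strong_induction_on with
  | _ k ih =>
  intro hk
  have hbs : ∀ c ∈ range k, Summable (b c) := fun c hc =>
    .of_nonneg_of_le (hb c) (hba c) ((ih c (mem_range.1 hc) (by simp at hc; omega)).mul_left M)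
  refine summable_of_sum_range_le (ha k) (c := 2 * C + ∑ c ∈ range k, ∑' t, b c t) fun T => ?_
  calc ∑ t ∈ range T, a k t
      ≤ ∑ t ∈ range T, ((F k (t + 1) - F k t) + ∑ c ∈ range k, b c t) :=
        sum_le_sum fun t _ => by linarith [hstep k hk t]
    _ = (F k T - F k 0) + ∑ c ∈ range k, ∑ t ∈ range T, b c t := by
        rw [sum_add_distrib, sum_range_sub, sum_comm]
    _ ≤ 2 * C + ∑ c ∈ range k, ∑' t, b c t := by
        gcongr with c hc
        · linarith [le_abs_self (F k T), neg_abs_le (F k 0), hF k T, hF k 0]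
        · exact (hbs c hc).sum_le_tsum _ fun t _ => hb c t

lemma exists_tendsto_of_neg_le_sub {F e : ℕ → ℝ} {C : ℝ} (he0 : ∀ t, 0 ≤ e t)
    (he : Summable e) (hF : ∀ t, F t ≤ C) (hstep : ∀ t, -e t ≤ F (t + 1) - F t) :
    ∃ L, Tendsto F atTop (𝓝 L) := by
  set G := fun T => F T + ∑ t ∈ range T, e t
  have hG : Monotone G := monotone_nat_of_le_succ fun T => by
    simp only [G, sum_range_succ]
    linarith [hstep T]
  have hGbdd : BddAbove (Set.range G) := ⟨C + ∑' t, e t, by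
    rintro _ ⟨T, rfl⟩
    exact add_le_add (hF T) (he.sum_le_tsum _ fun t _ => he0 t)⟩
  exact ⟨_, ((tendsto_atTop_ciSup hG hGbdd).sub he.hasSum.tendsto_sum_nat).congr
    fun T => add_sub_cancel_right _ _⟩

lemma summable_of_summable_mul_of_tendsto_pos {g φ : ℕ → ℝ} {γ : ℝ} (hγ : 0 < γ)
    (hg : Tendsto g atTop (𝓝 γ)) (hφ : ∀ t, 0 ≤ φ t) (hgφ : Summable fun t => g t * φ t) :
    Summable φ := by
  refine .of_norm_bounded_eventually_nat (hgφ.mul_left (2 / γ)) ?_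
  filter_upwards [hg.eventually (eventually_ge_nhds (half_lt_self hγ))] with t ht
  rw [Real.norm_of_nonneg (hφ t), ← mul_assoc]
  refine le_mul_of_one_le_left (hφ t) ?_
  rw [div_mul_eq_mul_div, one_le_div hγ]
  linarith

lemma abs_le_sum_abs_of_stochastic {ι : Type*} [Fintype ι] {P : ℕ → Matrix ι ι ℝ}
    {x : ℕ → ι → ℝ} (hP : ∀ t i j, 0 ≤ P t i j) (hrow : ∀ t i, ∑ j, P t i j = 1)
    (hx : ∀ t i, x (t + 1) i = ∑ j, P t i j * x t j) : ∀ t i, |x t i| ≤ ∑ j, |x 0 j| := by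
  intro t
  induction t with
  | zero => exact fun i => single_le_sum (fun j _ => abs_nonneg (x 0 j)) (mem_univ i)
  | succ t ih =>
    intro i
    calc |x (t + 1) i| ≤ ∑ j, P t i j * |x t j| := by
          rw [hx]
          refine (abs_sum_le_sum_abs _ _).trans_eq (sum_congr rfl fun j _ => ?_)
          rw [abs_mul, abs_of_nonneg (hP t i j)]
      _ ≤ ∑ j, P t i j * ∑ j, |x 0 j| := by gcongr with j; exacts [hP t i j, ih j]
      _ = ∑ j, |x 0 j| := by rw [← sum_mul, hrow, one_mul]

lemma abs_sum_le_mul_of_abs_le {n : ℕ} {C : ℝ} {x : Fin n → ℝ} (hx : ∀ i, |x i| ≤ C)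
    (S : Finset (Fin n)) : |∑ i ∈ S, x i| ≤ n * C := by
  calc |∑ i ∈ S, x i| ≤ ∑ i, |x i| :=
        (abs_sum_le_sum_abs _ _).trans <|
          sum_le_sum_of_subset_of_nonneg (subset_univ _) fun i _ _ => abs_nonneg _
    _ ≤ n * C := by simpa using sum_le_card_nsmul univ (fun i => |x i|) C fun i _ => hx i

section SortedTrajectory

variable {n : ℕ} {M : ℝ} {P : ℕ → Matrix (Fin (n + 1)) (Fin (n + 1)) ℝ}
  {z : ℕ → Fin (n + 1) → ℝ}

lemma gap_mul_downWeight_le {A : Matrix (Fin (n + 1)) (Fin (n + 1)) ℝ} {x : Fin (n + 1) → ℝ}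
    (hx : Monotone x) (hbal : ∀ c ∈ Icc 1 n, downWeight A c ≤ M * upWeight A c) (c : ℕ) :
    gap x c * downWeight A c ≤ M * (gap x c * upWeight A c) := by
  by_cases hc : c ∈ Icc 1 n
  · rw [mul_left_comm]
    exact mul_le_mul_of_nonneg_left (hbal c hc) (gap_nonneg hx c)
  · obtain rfl | hc := show c = 0 ∨ n < c by simp only [mem_Icc] at hc; omega
    · simp
    · simp [gap_eq_zero_of_lt hc]

lemma gap_mul_upWeight_sub_le_sum_lowerCut_sub (hP : ∀ t i j, 0 ≤ P t i j)
    (hrow : ∀ t i, ∑ j, P t i j = 1) (hz : ∀ t i, z (t + 1) i = ∑ j, P t i j * z t j)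
    (hmono : ∀ t, Monotone (z t)) {k : ℕ} (hk : k ≤ n + 1) (t : ℕ) :
    gap (z t) k * upWeight (P t) k - ∑ c ∈ range k, gap (z t) c * downWeight (P t) c
      ≤ ∑ i ∈ lowerCut (n + 1) k, z (t + 1) i - ∑ i ∈ lowerCut (n + 1) k, z t i := by
  rw [← sum_sub_distrib]
  simp only [hz]
  exact gap_mul_upWeight_sub_sum_le (hP t) (hrow t) (hmono t) hk

lemma summable_gap_mul_upWeight (hP : ∀ t i j, 0 ≤ P t i j) (hrow : ∀ t i, ∑ j, P t i j = 1)
    (hbal : ∀ t, ∀ c ∈ Icc 1 n, downWeight (P t) c ≤ M * upWeight (P t) c)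
    (hz : ∀ t i, z (t + 1) i = ∑ j, P t i j * z t j) (hmono : ∀ t, Monotone (z t)) :
    ∀ k ≤ n + 1, Summable fun t => gap (z t) k * upWeight (P t) k :=
  summable_of_sub_sum_le_sub (b := fun k t => gap (z t) k * downWeight (P t) k)
    (fun k t => mul_nonneg (gap_nonneg (hmono t) k) (upWeight_nonneg (hP t) k))
    (fun k t => mul_nonneg (gap_nonneg (hmono t) k) (downWeight_nonneg (hP t) k))
    (fun k t => gap_mul_downWeight_le (hmono t) (hbal t) k)
    (fun _ t => abs_sum_le_mul_of_abs_le (abs_le_sum_abs_of_stochastic hP hrow hz t) _)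
    fun _ hk t => gap_mul_upWeight_sub_le_sum_lowerCut_sub hP hrow hz hmono hk t

lemma exists_tendsto_sum_lowerCut (hP : ∀ t i j, 0 ≤ P t i j) (hrow : ∀ t i, ∑ j, P t i j = 1)
    (hbal : ∀ t, ∀ c ∈ Icc 1 n, downWeight (P t) c ≤ M * upWeight (P t) c)
    (hz : ∀ t i, z (t + 1) i = ∑ j, P t i j * z t j) (hmono : ∀ t, Monotone (z t))
    {k : ℕ} (hk : k ≤ n + 1) :
    ∃ ℓ, Tendsto (fun t => ∑ i ∈ lowerCut (n + 1) k, z t i) atTop (𝓝 ℓ) := by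
  have hdown : ∀ c t, 0 ≤ gap (z t) c * downWeight (P t) c := fun c t =>
    mul_nonneg (gap_nonneg (hmono t) c) (downWeight_nonneg (hP t) c)
  refine exists_tendsto_of_neg_le_sub
    (e := fun t => ∑ c ∈ range k, gap (z t) c * downWeight (P t) c)
    (fun t => sum_nonneg fun c _ => hdown c t)
    (summable_sum fun c hc => .of_nonneg_of_le (hdown c)
      (fun t => gap_mul_downWeight_le (hmono t) (hbal t) c)
      ((summable_gap_mul_upWeight hP hrow hbal hz hmono c (by simp at hc; omega)).mul_left M))
    (fun t => le_of_abs_le (abs_sum_le_mul_of_abs_le (abs_le_sum_abs_of_stochastic hP hrow hz t) _))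
    fun t => ?_
  have hup : 0 ≤ gap (z t) k * upWeight (P t) k :=
    mul_nonneg (gap_nonneg (hmono t) k) (upWeight_nonneg (hP t) k)
  linarith [gap_mul_upWeight_sub_le_sum_lowerCut_sub hP hrow hz hmono hk t]

theorem exists_tendsto_const_of_sorted (hP : ∀ t i j, 0 ≤ P t i j)
    (hrow : ∀ t i, ∑ j, P t i j = 1)
    (hbal : ∀ t, ∀ c ∈ Icc 1 n, downWeight (P t) c ≤ M * upWeight (P t) c)
    (hflow : ∀ c ∈ Icc 1 n, Tendsto (fun T => ∑ t ∈ range T,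
      (downWeight (P t) c + upWeight (P t) c)) atTop atTop)
    (hz : ∀ t i, z (t + 1) i = ∑ j, P t i j * z t j) (hmono : ∀ t, Monotone (z t)) :
    ∃ ℓ, ∀ i, Tendsto (fun t => z t i) atTop (𝓝 ℓ) := by
  have hconv (i : Fin (n + 1)) : ∃ ℓ, Tendsto (fun t => z t i) atTop (𝓝 ℓ) := by
    obtain ⟨ℓ₁, h₁⟩ := exists_tendsto_sum_lowerCut hP hrow hbal hz hmono i.is_lt
    obtain ⟨ℓ₀, h₀⟩ := exists_tendsto_sum_lowerCut hP hrow hbal hz hmono i.is_lt.le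
    exact ⟨ℓ₁ - ℓ₀, (h₁.sub h₀).congr fun t => sum_lowerCut_succ_sub (z t) i⟩
  choose ℓ hℓ using hconv
  have hℓmono : Monotone ℓ := fun i j hij =>
    le_of_tendsto_of_tendsto' (hℓ i) (hℓ j) fun t => hmono t hij
  have hgap : ∀ c ∈ Icc 1 n, gap ℓ c = 0 := by
    intro c hc
    by_contra hne
    have hup : Summable fun t => upWeight (P t) c :=
      summable_of_summable_mul_of_tendsto_pos ((gap_nonneg hℓmono c).lt_of_ne' hne)
        ((hℓ _).sub (hℓ _)) (fun t => upWeight_nonneg (hP t) c)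
        (summable_gap_mul_upWeight hP hrow hbal hz hmono c (by simp at hc; omega))
    have hdown : Summable fun t => downWeight (P t) c := .of_nonneg_of_le
      (fun t => downWeight_nonneg (hP t) c) (fun t => hbal t c hc) (hup.mul_left M)
    exact not_tendsto_atTop_of_tendsto_nhds (hdown.add hup).hasSum.tendsto_sum_nat (hflow c hc)
  have hlast : ℓ (Fin.last n) = ℓ 0 := by
    rw [eq_add_sum_gap ℓ (Fin.last n), add_eq_left]
    refine sum_eq_zero fun c hc => ?_
    rcases Nat.eq_zero_or_pos c with rfl | hc0
    · simp
    · rw [hgap c (by simp at hc ⊢; omega), ite_self]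
  refine ⟨ℓ 0, fun i => ?_⟩
  rw [← le_antisymm (hlast ▸ hℓmono (Fin.le_last i)) (hℓmono (Fin.zero_le i))]
  exact hℓ i

end SortedTrajectory

section Relabelling

variable {n : ℕ}

lemma upWeight_submatrix (A : Matrix (Fin n) (Fin n) ℝ) (e f : Equiv.Perm (Fin n)) (c : ℕ) :
    upWeight (A.submatrix e f) c =
      cutWeight A ((lowerCut n c).map e.toEmbedding) ((lowerCut n c).map f.toEmbedding)ᶜ := by
  rw [upWeight, cutWeight_submatrix, map_compl_equiv]

lemma downWeight_submatrix (A : Matrix (Fin n) (Fin n) ℝ) (e f : Equiv.Perm (Fin n)) (c : ℕ) :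
    downWeight (A.submatrix e f) c =
      cutWeight A ((lowerCut n c).map e.toEmbedding)ᶜ ((lowerCut n c).map f.toEmbedding) := by
  rw [downWeight, cutWeight_submatrix, map_compl_equiv]

lemma card_map_lowerCut (e : Equiv.Perm (Fin (n + 1))) {c : ℕ} (hc : c ∈ Icc 1 n) :
    #((lowerCut (n + 1) c).map e.toEmbedding) = c := by
  rw [card_map, card_lowerCut]
  simp only [mem_Icc] at hc
  omega

lemma map_lowerCut_nonempty_ne_univ (e : Equiv.Perm (Fin (n + 1))) {c : ℕ} (hc : c ∈ Icc 1 n) :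
    ((lowerCut (n + 1) c).map e.toEmbedding).Nonempty ∧
      (lowerCut (n + 1) c).map e.toEmbedding ≠ univ := by
  have hcard := card_map_lowerCut e hc
  simp only [mem_Icc] at hc
  refine ⟨card_pos.1 (by omega), fun h => ?_⟩
  rw [h, card_univ, Fintype.card_fin] at hcard
  omega

end Relabelling

lemma comp_perm_trajectory {ι : Type*} [Fintype ι] {B : ℕ → Matrix ι ι ℝ} {y : ℕ → ι → ℝ}
    (σ : ℕ → Equiv.Perm ι) (hy : ∀ t i, y (t + 1) i = ∑ j, B t i j * y t j) (t : ℕ) (i : ι) :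
    (y (t + 1) ∘ σ (t + 1)) i = ∑ j, (B t).submatrix (σ (t + 1)) (σ t) i j * (y t ∘ σ t) j := by
  simp only [Function.comp_apply, Matrix.submatrix_apply, hy]
  exact (Equiv.sum_comp (σ t) _).symm

theorem stmt15_general (N : ℕ) (hN : 2 ≤ N) (M : ℝ)
    (B : ℕ → Matrix (Fin N) (Fin N) ℝ)
    (hnonneg : ∀ t i j, 0 ≤ B t i j)
    (hrow : ∀ t i, ∑ j, B t i j = 1)
    (hbal : ∀ t : ℕ, ∀ S1 S2 : Finset (Fin N), S1.Nonempty → S1 ≠ Finset.univ →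
      S2.Nonempty → S2 ≠ Finset.univ → S1.card = S2.card →
      ∑ i ∈ S1ᶜ, ∑ j ∈ S2, B t i j ≤ M * ∑ i ∈ S1, ∑ j ∈ S2ᶜ, B t i j)
    (haif : ∀ S : ℕ → Finset (Fin N),
      (∀ t, (S t).Nonempty ∧ S t ≠ Finset.univ) →
      (∀ t, (S t).card = (S 0).card) →
      Tendsto (fun n => ∑ t ∈ Finset.range n,
        ((∑ i ∈ (S (t + 1))ᶜ, ∑ j ∈ S t, B t i j) +
          ∑ i ∈ S (t + 1), ∑ j ∈ (S t)ᶜ, B t i j)) atTop atTop) :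
    ∀ y : ℕ → Fin N → ℝ,
      (∀ t i, y (t + 1) i = ∑ j, B t i j * y t j) →
      ∃ c : ℝ, ∀ i, Tendsto (fun t => y t i) atTop (nhds c) := by
  intro y hy
  obtain ⟨n, rfl⟩ : ∃ n, N = n + 1 := ⟨N - 1, by omega⟩
  set σ : ℕ → Equiv.Perm (Fin (n + 1)) := fun t => Tuple.sort (y t)
  have hsorted : ∀ t, Monotone (y t ∘ σ t) := fun t => Tuple.monotone_sort (y t)
  have hcut := fun c (hc : c ∈ Icc 1 n) t => map_lowerCut_nonempty_ne_univ (σ t) hc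
  obtain ⟨ℓ, hℓ⟩ := exists_tendsto_const_of_sorted (M := M)
    (P := fun t => (B t).submatrix (σ (t + 1)) (σ t)) (z := fun t => y t ∘ σ t)
    (fun t i j => hnonneg _ _ _) (fun t i => (Equiv.sum_comp (σ t) _).trans (hrow _ _))
    (fun t c hc => by
      rw [downWeight_submatrix, upWeight_submatrix]
      exact hbal t _ _ (hcut c hc _).1 (hcut c hc _).2 (hcut c hc _).1 (hcut c hc _).2
        (by rw [card_map_lowerCut _ hc, card_map_lowerCut _ hc]))
    (fun c hc => by
      simpa only [downWeight_submatrix, upWeight_submatrix, cutWeight] using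
        haif _ (hcut c hc) fun t => by rw [card_map_lowerCut _ hc, card_map_lowerCut _ hc])
    (comp_perm_trajectory σ hy) hsorted
  refine ⟨ℓ, fun i => tendsto_of_tendsto_of_tendsto_of_le_of_le (hℓ 0) (hℓ (Fin.last n))
    (fun t => ?_) (fun t => ?_)⟩
  · simpa using hsorted t (Fin.zero_le ((σ t).symm i))
  · simpa using hsorted t (Fin.le_last ((σ t).symm i))

theorem stmt15 (N : ℕ) (hN : 2 ≤ N) (M : ℝ) (hM : 1 ≤ M)
    (B : ℕ → Matrix (Fin N) (Fin N) ℝ)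
    (hnonneg : ∀ t i j, 0 ≤ B t i j)
    (hrow : ∀ t i, ∑ j, B t i j = 1)
    (hbal : ∀ t : ℕ, ∀ S1 S2 : Finset (Fin N), S1.Nonempty → S1 ≠ Finset.univ →
      S2.Nonempty → S2 ≠ Finset.univ → S1.card = S2.card →
      ∑ i ∈ S1ᶜ, ∑ j ∈ S2, B t i j ≤ M * ∑ i ∈ S1, ∑ j ∈ S2ᶜ, B t i j)
    (haif : ∀ S : ℕ → Finset (Fin N),
      (∀ t, (S t).Nonempty ∧ S t ≠ Finset.univ) →
      (∀ t, (S t).card = (S 0).card) →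
      Tendsto (fun n => ∑ t ∈ Finset.range n,
        ((∑ i ∈ (S (t + 1))ᶜ, ∑ j ∈ S t, B t i j) +
          ∑ i ∈ S (t + 1), ∑ j ∈ (S t)ᶜ, B t i j)) atTop atTop) :
    ∀ y : ℕ → Fin N → ℝ,
      (∀ t i, y (t + 1) i = ∑ j, B t i j * y t j) →
      ∃ c : ℝ, ∀ i, Tendsto (fun t => y t i) atTop (nhds c) :=
  stmt15_general N hN M B hnonneg hrow hbal haif
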